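/- arXiv:2212.02305 — 2 statements merged into one kernel-verified Lean document; each statement's English description precedes it below -/
import Mathlib

section
/- Let B = UUᵀ ∈ ℝ^{n×n} and R ∈ ℝ^{m×m}, with m < n, be symmetric positive-definite circulant matrices, with U the symmetric square root of B, and let H ∈ ℝ^{m×n} be a uniform selection operator with n = ζm. If S = I_n + Uᵀ Hᵀ R^{-1} H U, then S has the eigenvalue 1 with multiplicity at least n − m, and its remaining m eigenvalues are 1 + λ_i(H B Hᵀ)/λ_i(R) for i in {0,...,m-1}, where eigenvalues of the circulant matrices H B Hᵀ and R are taken with respect to the common m-point Fourier basis. -/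
open Matrix Polynomial

/-- The (unnormalised-frequency) `i`-th Fourier eigenvector of size-`m` circulant
matrices: `f^(i)_p = (1/√m) exp(-2πI i p / m)`. -/
noncomputable def fourierVec (m : ℕ) [NeZero m] (i : ZMod m) : ZMod m → ℂ :=
  fun p => (1 / (Real.sqrt m : ℂ)) *
    Complex.exp (-(2 * Real.pi * Complex.I * (i.val : ℂ) * (p.val : ℂ)) / m)

/-- The `i`-th Fourier eigenvalue of a (circulant) matrix `A`, i.e. the `i`-th DFT
coefficient of its first column: `λ_i(A) = Σ_k A k 0 · exp(2πI i k / m)`. -/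
noncomputable def fourierEig {m : ℕ} [NeZero m] (A : Matrix (ZMod m) (ZMod m) ℂ)
    (i : ZMod m) : ℂ :=
  ∑ k : ZMod m, A k 0 * Complex.exp (2 * Real.pi * Complex.I * (i.val : ℂ) * (k.val : ℂ) / m)

/-- A matrix indexed by `ZMod m` is circulant iff it is invariant under simultaneous
cyclic shifts of rows and columns. -/
def IsCirculant {m : ℕ} {α : Type*} (A : Matrix (ZMod m) (ZMod m) α) : Prop :=
  ∀ i j d : ZMod m, A (i + d) (j + d) = A i j

/-- The uniform selection operator `H : ℝ^{m×n}` picking every `ζ`-th component: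
`(Hx)_p = x_{ζ p}`. -/
noncomputable def selectionOp (ζ m n : ℕ) [NeZero m] [NeZero n] :
    Matrix (ZMod m) (ZMod n) ℝ :=
  Matrix.of fun p q => if q.val = ζ * p.val then 1 else 0

/-- The periodic second-difference (Laplacian) matrix with grid spacing `h`,
stencil `(1, -2, 1)/h²` with periodic boundary conditions. -/
noncomputable def lap (m : ℕ) [NeZero m] (h : ℝ) : Matrix (ZMod m) (ZMod m) ℝ :=
  Matrix.of fun i j =>
    ((if i = j then (-2 : ℝ) else 0) + (if i = j + 1 then 1 else 0) +
      (if j = i + 1 then 1 else 0)) / h ^ 2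

/-- The diffusion-modelled covariance matrix
`(σ² ν L / h) (I - L² Δ_h)^{-M}` on an `m`-point periodic grid. -/
noncomputable def diffCov (m : ℕ) [NeZero m] (σ ν L h : ℝ) (M : ℕ) :
    Matrix (ZMod m) (ZMod m) ℝ :=
  (σ ^ 2 * ν * L / h) • ((1 - (L ^ 2) • lap m h) ^ M)⁻¹

/-- The spectral condition number `κ(A) = λ_max(A)/λ_min(A)` (via the real spectrum). -/
noncomputable def condNum {k : Type*} [Fintype k] [DecidableEq k]
    (A : Matrix k k ℝ) : ℝ :=
  sSup (spectrum ℝ A) / sInf (spectrum ℝ A)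

/-! Writing `S = 1 + (Uᵀ Hᵀ) (R⁻¹ H U)` and swapping the two rectangular factors, the
characteristic polynomial of `S - 1` is `X ^ (n - m)` times that of the `m × m` matrix
`R⁻¹ (H B Hᵀ)`, since `U Uᵀ = B`. Both `R` and `H B Hᵀ` are circulant (the selection operator
commutes with the cyclic shifts of `ZMod m` and `ZMod n`), so the discrete Fourier matrix
conjugates them simultaneously to the diagonal matrices of their `fourierEig`s, and these
eigenvalues are real because the matrices are real symmetric. -/

open ZMod

theorem Matrix.charpoly_one_add_mul {p q R : Type*} [Fintype p] [DecidableEq p] [Fintype q]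
    [DecidableEq q] [CommRing R] (A : Matrix p q R) (B : Matrix q p R)
    (h : Fintype.card q ≤ Fintype.card p) :
    (1 + A * B).charpoly =
      (X ^ (Fintype.card p - Fintype.card q) * (B * A).charpoly).comp (X - 1) := by
  rw [show 1 + A * B = A * B - scalar p (-1 : R) by simp [sub_eq_add_neg, add_comm],
    charpoly_sub_scalar, charpoly_mul_comm_of_le _ _ h, map_neg, map_one, ← sub_eq_add_neg]

theorem Matrix.IsSymm.mul_mul_transpose {m n α : Type*} [Fintype n] [CommSemiring α]
    {B : Matrix n n α} (hB : B.IsSymm) (A : Matrix m n α) : (A * B * Aᵀ).IsSymm := by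
  simp only [IsSymm, transpose_mul, transpose_transpose, hB.eq, Matrix.mul_assoc]

theorem Matrix.map_nonsing_inv {n α β : Type*} [Fintype n] [DecidableEq n] [CommRing α]
    [CommRing β] (f : α →+* β) {M : Matrix n n α} (h : IsUnit M.det) :
    M⁻¹.map f = (M.map f)⁻¹ :=
  (inv_eq_left_inv (by
    rw [← Matrix.map_mul, nonsing_inv_mul M h, Matrix.map_one _ f.map_zero f.map_one])).symm

theorem IsCirculant.map {m : ℕ} {α β : Type*} {A : Matrix (ZMod m) (ZMod m) α}
    (hA : IsCirculant A) (f : α → β) : IsCirculant (A.map f) :=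
  fun i j d => by simp only [map_apply, hA i j d]

theorem IsCirculant.apply_eq_sub {m : ℕ} {α : Type*} {A : Matrix (ZMod m) (ZMod m) α}
    (hA : IsCirculant A) (p q : ZMod m) : A p q = A (p - q) 0 := by
  simpa using hA (p - q) 0 q

section Fourier

variable {m : ℕ} [NeZero m]

theorem fourierEig_eq_sum_stdAddChar (A : Matrix (ZMod m) (ZMod m) ℂ) (i : ZMod m) :
    fourierEig A i = ∑ k, A k 0 * stdAddChar (i * k) := by
  refine Finset.sum_congr rfl fun k _ => ?_
  have hik : i * k = (((i.val * k.val : ℕ) : ℤ) : ZMod m) := by simp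
  rw [hik, stdAddChar_coe]
  push_cast
  ring_nf

-- The `i`-th column is `√m • fourierVec m i`.
noncomputable def dftMatrix (m : ℕ) [NeZero m] : Matrix (ZMod m) (ZMod m) ℂ :=
  LinearMap.toMatrix' (𝓕 : (ZMod m → ℂ) ≃ₗ[ℂ] (ZMod m → ℂ)).toLinearMap

noncomputable def invDFTMatrix (m : ℕ) [NeZero m] : Matrix (ZMod m) (ZMod m) ℂ :=
  LinearMap.toMatrix' (𝓕⁻ : (ZMod m → ℂ) ≃ₗ[ℂ] (ZMod m → ℂ)).toLinearMap

theorem dftMatrix_apply (p i : ZMod m) : dftMatrix m p i = stdAddChar (-(i * p)) := by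
  simp [dftMatrix, LinearMap.toMatrix'_apply, dft_apply, Pi.single_apply]

theorem dftMatrix_mul_invDFTMatrix : dftMatrix m * invDFTMatrix m = 1 := by
  rw [dftMatrix, invDFTMatrix, ← LinearMap.toMatrix'_comp]
  simp

theorem invDFTMatrix_mul_dftMatrix : invDFTMatrix m * dftMatrix m = 1 := by
  rw [dftMatrix, invDFTMatrix, ← LinearMap.toMatrix'_comp]
  simp

theorem IsCirculant.mul_dftMatrix {A : Matrix (ZMod m) (ZMod m) ℂ} (hA : IsCirculant A) :
    A * dftMatrix m = dftMatrix m * diagonal (fourierEig A) := by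
  ext p i
  rw [mul_diagonal, mul_apply, dftMatrix_apply, fourierEig_eq_sum_stdAddChar, Finset.mul_sum]
  refine Fintype.sum_equiv (Equiv.subLeft p) _ _ fun q => ?_
  rw [Equiv.subLeft_apply, dftMatrix_apply, hA.apply_eq_sub,
    show -(i * q) = -(i * p) + i * (p - q) by ring, AddChar.map_add_eq_mul]
  ring

theorem IsCirculant.invDFTMatrix_mul_mul_dftMatrix {A : Matrix (ZMod m) (ZMod m) ℂ}
    (hA : IsCirculant A) : invDFTMatrix m * A * dftMatrix m = diagonal (fourierEig A) := by
  rw [mul_assoc, hA.mul_dftMatrix, ← mul_assoc, invDFTMatrix_mul_dftMatrix, one_mul]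

theorem IsCirculant.fourierEig_ne_zero {A : Matrix (ZMod m) (ZMod m) ℂ} (hA : IsCirculant A)
    (hdet : A.det ≠ 0) (i : ZMod m) : fourierEig A i ≠ 0 := by
  have hdiag : (diagonal (fourierEig A)).det = A.det := by
    rw [← hA.invDFTMatrix_mul_mul_dftMatrix, det_mul, det_mul, mul_comm, ← mul_assoc, ← det_mul,
      dftMatrix_mul_invDFTMatrix, det_one, one_mul]
  rw [det_diagonal] at hdiag
  exact Finset.prod_ne_zero_iff.mp (hdiag ▸ hdet) i (Finset.mem_univ i)

theorem IsCirculant.charpoly_inv_mul {R A : Matrix (ZMod m) (ZMod m) ℂ} (hR : IsCirculant R)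
    (hA : IsCirculant A) (hdet : R.det ≠ 0) :
    (R⁻¹ * A).charpoly = ∏ i, (X - Polynomial.C (fourierEig A i / fourierEig R i)) := by
  set F := dftMatrix m
  set G := invDFTMatrix m
  have hFG : F * G = 1 := dftMatrix_mul_invDFTMatrix
  have hGF : G * F = 1 := invDFTMatrix_mul_dftMatrix
  have hRinv : G * R⁻¹ * F = diagonal (fourierEig R)⁻¹ := by
    calc G * R⁻¹ * F = (G * R * F)⁻¹ := by
          rw [Matrix.mul_inv_rev, Matrix.mul_inv_rev, inv_eq_left_inv hGF, inv_eq_left_inv hFG,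
            mul_assoc]
      _ = diagonal (fourierEig R)⁻¹ := by
          rw [hR.invDFTMatrix_mul_mul_dftMatrix]
          refine inv_eq_left_inv ?_
          rw [diagonal_mul_diagonal, ← diagonal_one]
          exact congrArg diagonal (funext fun i => inv_mul_cancel₀ (hR.fourierEig_ne_zero hdet i))
  have hconj : G * (R⁻¹ * A) * F = diagonal fun i => fourierEig A i / fourierEig R i := by
    calc G * (R⁻¹ * A) * F = (G * R⁻¹ * F) * (G * A * F) := by
          simp only [mul_assoc, ← mul_assoc F G, hFG, one_mul]
      _ = _ := by
          rw [hRinv, hA.invDFTMatrix_mul_mul_dftMatrix, diagonal_mul_diagonal]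
          simp only [Pi.inv_apply, div_eq_inv_mul]
  rw [← charpoly_diagonal, ← hconj, charpoly_mul_comm (G * _), ← mul_assoc, hFG, one_mul]

theorem IsCirculant.ofReal_re_fourierEig {A : Matrix (ZMod m) (ZMod m) ℝ} (hA : IsCirculant A)
    (hsymm : A.IsSymm) (i : ZMod m) :
    ((fourierEig (A.map Complex.ofReal) i).re : ℂ) = fourierEig (A.map Complex.ofReal) i := by
  rw [← Complex.conj_eq_iff_re, fourierEig_eq_sum_stdAddChar, map_sum]
  refine Fintype.sum_equiv (Equiv.neg _) _ _ fun k => ?_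
  have hneg : A (-k) 0 = A k 0 := by
    rw [← zero_sub, ← hA.apply_eq_sub, ← hsymm.apply k 0]
  simp only [Equiv.neg_apply, map_apply, map_mul, Complex.conj_ofReal, hneg,
    ← AddChar.map_neg_eq_conj, mul_neg]

theorem IsCirculant.charpoly_inv_mul_of_isSymm {R A : Matrix (ZMod m) (ZMod m) ℝ}
    (hR : IsCirculant R) (hA : IsCirculant A) (hRs : R.IsSymm) (hAs : A.IsSymm)
    (hdet : R.det ≠ 0) :
    (R⁻¹ * A).charpoly = ∏ i, (X - Polynomial.C ((fourierEig (A.map Complex.ofReal) i).re /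
      (fourierEig (R.map Complex.ofReal) i).re)) := by
  apply Polynomial.map_injective Complex.ofRealHom Complex.ofReal_injective
  have hdetC : (R.map Complex.ofReal).det ≠ 0 := by
    rw [show R.map Complex.ofReal = Complex.ofRealHom.mapMatrix R from rfl, ← RingHom.map_det]
    exact Complex.ofReal_ne_zero.mpr hdet
  rw [← charpoly_map, Matrix.map_mul, Matrix.map_nonsing_inv _ hdet.isUnit,
    show ⇑Complex.ofRealHom = Complex.ofReal from rfl,
    (hR.map _).charpoly_inv_mul (hA.map _) hdetC, Polynomial.map_prod]
  refine Finset.prod_congr rfl fun i _ => ?_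
  rw [Polynomial.map_sub, Polynomial.map_X, Polynomial.map_C, Complex.ofRealHom_eq_coe,
    Complex.ofReal_div, hA.ofReal_re_fourierEig hAs, hR.ofReal_re_fourierEig hRs]

end Fourier

section Selection

variable {ζ m n : ℕ} [NeZero m]

def selectionIndex (ζ n : ℕ) (p : ZMod m) : ZMod n := ((ζ * p.val : ℕ) : ZMod n)

theorem selectionIndex_add (hn : n = ζ * m) (p d : ZMod m) :
    selectionIndex ζ n (p + d) = selectionIndex ζ n p + selectionIndex ζ n d := by
  rw [selectionIndex, selectionIndex, selectionIndex, ← Nat.cast_add, ← Nat.mul_add,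
    ZMod.natCast_eq_natCast_iff, ZMod.val_add, hn]
  exact Nat.ModEq.mul_left' ζ (Nat.mod_modEq _ m)

variable [NeZero n]

theorem selectionOp_apply (hn : n = ζ * m) (p : ZMod m) (q : ZMod n) :
    selectionOp ζ m n p q = if q = selectionIndex ζ n p then 1 else 0 := by
  have hζ : 0 < ζ := Nat.pos_of_ne_zero fun h => NeZero.ne n (by rw [hn, h, zero_mul])
  have hlt : ζ * p.val < n := hn ▸ (Nat.mul_lt_mul_left hζ).mpr (ZMod.val_lt p)
  simp only [selectionOp, of_apply, selectionIndex, ← (ZMod.val_injective n).eq_iff,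
    ZMod.val_cast_of_lt hlt]

theorem selectionOp_mul_mul_transpose_apply (hn : n = ζ * m) (M : Matrix (ZMod n) (ZMod n) ℝ)
    (p q : ZMod m) :
    (selectionOp ζ m n * M * (selectionOp ζ m n)ᵀ) p q
      = M (selectionIndex ζ n p) (selectionIndex ζ n q) := by
  simp [mul_apply, selectionOp_apply hn]

theorem IsCirculant.selectionOp_mul_mul_transpose (hn : n = ζ * m)
    {M : Matrix (ZMod n) (ZMod n) ℝ} (hM : IsCirculant M) :
    IsCirculant (selectionOp ζ m n * M * (selectionOp ζ m n)ᵀ) := by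
  intro p q d
  simp only [selectionOp_mul_mul_transpose_apply hn, selectionIndex_add hn, hM _ _ _]

end Selection

theorem stmt3_general (ζ m n : ℕ) [NeZero m] [NeZero n] (hn : n = ζ * m)
    (hmn : m < n)
    (B U : Matrix (ZMod n) (ZMod n) ℝ) (R : Matrix (ZMod m) (ZMod m) ℝ)
    (hBcirc : IsCirculant B)
    (hRcirc : IsCirculant R) (hRpd : R.PosDef)
    (hUsymm : U.IsSymm) (hUU : U * U = B)
    (H : Matrix (ZMod m) (ZMod n) ℝ) (hH : H = selectionOp ζ m n)
    (S : Matrix (ZMod n) (ZMod n) ℝ)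
    (hS : S = 1 + U.transpose * H.transpose * R⁻¹ * H * U) :
    S.charpoly = (Polynomial.X - 1) ^ (n - m) *
      ∏ i : ZMod m, (Polynomial.X - Polynomial.C
        (1 + (fourierEig ((H * B * H.transpose).map Complex.ofReal) i).re /
              (fourierEig (R.map Complex.ofReal) i).re)) := by
  have hSfactor : S = 1 + (Uᵀ * Hᵀ) * (R⁻¹ * H * U) := by simp only [hS, Matrix.mul_assoc]
  have hswap : (R⁻¹ * H * U) * (Uᵀ * Hᵀ) = R⁻¹ * (H * B * Hᵀ) := by
    rw [hUsymm.eq, ← hUU]; simp only [Matrix.mul_assoc]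
  have hRsymm : R.IsSymm := isHermitian_iff_isSymm.mp hRpd.isHermitian
  have hB : B.IsSymm := by simpa only [hUsymm.eq, hUU] using isSymm_mul_transpose_self U
  have hcirc : IsCirculant (H * B * Hᵀ) := hH ▸ hBcirc.selectionOp_mul_mul_transpose hn
  rw [hSfactor, charpoly_one_add_mul _ _ (by simpa using hmn.le), hswap,
    hRcirc.charpoly_inv_mul_of_isSymm hcirc hRsymm (hB.mul_mul_transpose H) hRpd.det_pos.ne']
  simp only [Polynomial.mul_comp, Polynomial.pow_comp, Polynomial.X_comp, Polynomial.prod_comp,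
    Polynomial.sub_comp, Polynomial.C_comp, ZMod.card, Polynomial.C_add, Polynomial.C_1,
    sub_add_eq_sub_sub]

/-- With `B = U Uᵀ` and `R` symmetric positive-definite circulant
matrices, `U` the symmetric square root of `B`, and `H` a uniform selection
operator (`n = ζ m`, `m < n`), the matrix `S = I + Uᵀ Hᵀ R⁻¹ H U` has eigenvalue
`1` with multiplicity at least `n - m`, the remaining `m` eigenvalues being
`1 + λ_i(H B Hᵀ)/λ_i(R)` in the common Fourier basis (expressed via the
characteristic polynomial, which counts algebraic multiplicities). -/
theorem stmt3 (ζ m n : ℕ) [NeZero m] [NeZero n] (hζ : 0 < ζ) (hn : n = ζ * m)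
    (hmn : m < n)
    (B U : Matrix (ZMod n) (ZMod n) ℝ) (R : Matrix (ZMod m) (ZMod m) ℝ)
    (hBcirc : IsCirculant B) (hBpd : B.PosDef)
    (hRcirc : IsCirculant R) (hRpd : R.PosDef)
    (hUsymm : U.IsSymm) (hUpd : U.PosDef) (hUU : U * U = B)
    (H : Matrix (ZMod m) (ZMod n) ℝ) (hH : H = selectionOp ζ m n)
    (S : Matrix (ZMod n) (ZMod n) ℝ)
    (hS : S = 1 + U.transpose * H.transpose * R⁻¹ * H * U) :
    S.charpoly = (Polynomial.X - 1) ^ (n - m) *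
      ∏ i : ZMod m, (Polynomial.X - Polynomial.C
        (1 + (fourierEig ((H * B * H.transpose).map Complex.ofReal) i).re /
              (fourierEig (R.map Complex.ofReal) i).re)) :=
  stmt3_general ζ m n hn hmn B U R hBcirc hRcirc hRpd hUsymm hUU H hH S hS
end

section
/- Let B ∈ ℝ^{n×n} be symmetric positive-definite with symmetric square root U, R ∈ ℝ^{m×m} symmetric positive-definite with symmetric square root V, H ∈ ℝ^{m×n}, m < n, and S = I_n + U Hᵀ R^{−1} H U. Then κ(S) ≤ 1 + ‖V^{−1} H B Hᵀ V^{−1}‖_∞, where ‖·‖_∞ is the maximum-absolute-row-sum norm. -/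
open Matrix

/-- The maximum-absolute-row-sum (infinity) norm of a matrix. -/
noncomputable def infNorm {k : Type*} [Fintype k] (A : Matrix k k ℝ) : ℝ :=
  ⨆ i : k, ∑ j : k, |A i j|

/-! With `A = V⁻¹ H U` one has `S = 1 + Aᵀ A` and `V⁻¹ H B Hᵀ V⁻¹ = A Aᵀ`. An eigenvector `v` of
`S` for `μ` gives `Aᵀ A v = (μ - 1) v`, so `μ ≥ 1`, and either `A v = 0` (then `μ = 1`) or `A v` is
an eigenvector of `A Aᵀ` for `μ - 1`, whose size is bounded by the infinity norm (Gershgorin). -/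

section InfNorm

variable {k : Type*} [Fintype k]

lemma infNorm_nonneg (A : Matrix k k ℝ) : 0 ≤ infNorm A :=
  Real.iSup_nonneg fun _ => Finset.sum_nonneg fun _ _ => abs_nonneg _

lemma sum_abs_le_infNorm (A : Matrix k k ℝ) (i : k) : ∑ j, |A i j| ≤ infNorm A :=
  le_ciSup (f := fun i => ∑ j, |A i j|) (Set.finite_range _).bddAbove i

lemma abs_le_infNorm_of_hasEigenvalue [DecidableEq k] {W : Matrix k k ℝ} {μ : ℝ}
    (hμ : Module.End.HasEigenvalue (toLin' W) μ) : |μ| ≤ infNorm W := by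
  obtain ⟨i, hi⟩ := eigenvalue_mem_ball hμ
  rw [Metric.mem_closedBall, Real.dist_eq] at hi
  simp only [Real.norm_eq_abs] at hi
  calc |μ| ≤ |W i i| + |μ - W i i| := by
        simpa using abs_add_le (W i i) (μ - W i i)
    _ ≤ |W i i| + ∑ j ∈ Finset.univ.erase i, |W i j| := by gcongr
    _ = ∑ j, |W i j| := Finset.add_sum_erase _ (fun j => |W i j|) (Finset.mem_univ i)
    _ ≤ infNorm W := sum_abs_le_infNorm W i

end InfNorm

lemma condNum_le_of_spectrum_subset_Icc {k : Type*} [Fintype k] [DecidableEq k]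
    {A : Matrix k k ℝ} {a b : ℝ} (ha : 0 < a) (hab : a ≤ b)
    (h : spectrum ℝ A ⊆ Set.Icc a b) : condNum A ≤ b / a := by
  rcases (spectrum ℝ A).eq_empty_or_nonempty with hempty | hne
  · -- junk value: `sSup ∅ = sInf ∅ = 0` in `ℝ`
    rw [condNum, hempty, Real.sSup_empty, Real.sInf_empty, zero_div]
    exact div_nonneg (ha.le.trans hab) ha.le
  · exact div_le_div₀ (ha.le.trans hab) (csSup_le hne fun μ hμ => (h hμ).2) ha
      (le_csInf hne fun μ hμ => (h hμ).1)

lemma spectrum_one_add_transpose_mul_self_subset {m n : Type*} [Fintype m] [Fintype n]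
    [DecidableEq m] [DecidableEq n] (A : Matrix m n ℝ) :
    spectrum ℝ (1 + Aᵀ * A) ⊆ Set.Icc 1 (1 + infNorm (A * Aᵀ)) := by
  intro μ hμ
  rw [← spectrum_toLin', ← Module.End.hasEigenvalue_iff_mem_spectrum] at hμ
  obtain ⟨v, hv_mem, hv0⟩ := hμ.exists_hasEigenvector
  rw [Module.End.mem_eigenspace_iff, toLin'_apply, add_mulVec, one_mulVec,
    ← mulVec_mulVec] at hv_mem
  have hAv : Aᵀ *ᵥ (A *ᵥ v) = (μ - 1) • v := by rw [sub_smul, one_smul, ← hv_mem]; abel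
  constructor
  · have hquad : (μ - 1) * (v ⬝ᵥ v) = (A *ᵥ v) ⬝ᵥ (A *ᵥ v) := by
      rw [← smul_eq_mul, ← dotProduct_smul, ← hAv, dotProduct_mulVec, vecMul_transpose]
    have hv_pos : 0 < v ⬝ᵥ v :=
      lt_of_le_of_ne (Finset.sum_nonneg fun i _ => mul_self_nonneg (v i))
        (Ne.symm (mt dotProduct_self_eq_zero.mp hv0))
    have : 0 ≤ (μ - 1) * (v ⬝ᵥ v) :=
      hquad ▸ Finset.sum_nonneg fun i _ => mul_self_nonneg _
    linarith [nonneg_of_mul_nonneg_left this hv_pos]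
  · suffices μ - 1 ≤ infNorm (A * Aᵀ) by linarith
    by_cases hA : A *ᵥ v = 0
    · have : (μ - 1) • v = 0 := by rw [← hAv, hA, mulVec_zero]
      rw [(smul_eq_zero.mp this).resolve_right hv0]
      exact infNorm_nonneg _
    · have heig : Module.End.HasEigenvector (toLin' (A * Aᵀ)) (μ - 1) (A *ᵥ v) := by
        refine ⟨Module.End.mem_eigenspace_iff.mpr ?_, hA⟩
        rw [toLin'_apply, ← mulVec_mulVec, hAv, mulVec_smul]
      exact (le_abs_self _).trans
        (abs_le_infNorm_of_hasEigenvalue (Module.End.hasEigenvalue_of_hasEigenvector heig))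

theorem stmt19_general (n m : ℕ)
    (B U : Matrix (Fin n) (Fin n) ℝ) (R V : Matrix (Fin m) (Fin m) ℝ)
    (hUsymm : U.IsSymm) (hUU : U * U = B)
    (hVsymm : V.IsSymm) (hVV : V * V = R)
    (H : Matrix (Fin m) (Fin n) ℝ)
    (S : Matrix (Fin n) (Fin n) ℝ)
    (hS : S = 1 + U * H.transpose * R⁻¹ * H * U) :
    condNum S ≤ 1 + infNorm (V⁻¹ * H * B * H.transpose * V⁻¹) := by
  set A := V⁻¹ * H * U
  have hAT : Aᵀ = U * Hᵀ * V⁻¹ := by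
    rw [transpose_mul, transpose_mul, hUsymm, transpose_nonsing_inv, hVsymm, Matrix.mul_assoc]
  have hW : V⁻¹ * H * B * Hᵀ * V⁻¹ = A * Aᵀ := by
    rw [hAT, ← hUU]
    simp only [A, Matrix.mul_assoc]
  have hSA : S = 1 + Aᵀ * A := by
    rw [hS, hAT, ← hVV, Matrix.mul_inv_rev]
    simp only [A, Matrix.mul_assoc]
  rw [hSA, hW, ← div_one (1 + infNorm _)]
  exact condNum_le_of_spectrum_subset_Icc one_pos (le_add_of_nonneg_right (infNorm_nonneg _))
    (spectrum_one_add_transpose_mul_self_subset A)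

/-- (Theorem 3 of Tabeart et al. 2021.) For symmetric
positive-definite `B ∈ ℝ^{n×n}`, `R ∈ ℝ^{m×m}` with symmetric square roots `U`, `V`,
any `H ∈ ℝ^{m×n}` with `m < n`, and `S = I + U Hᵀ R⁻¹ H U`, one has
`κ(S) ≤ 1 + ‖V⁻¹ H B Hᵀ V⁻¹‖_∞`. -/
theorem stmt19 (n m : ℕ) (hmn : m < n)
    (B U : Matrix (Fin n) (Fin n) ℝ) (R V : Matrix (Fin m) (Fin m) ℝ)
    (hBpd : B.PosDef) (hRpd : R.PosDef)
    (hUsymm : U.IsSymm) (hUU : U * U = B)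
    (hVsymm : V.IsSymm) (hVV : V * V = R)
    (H : Matrix (Fin m) (Fin n) ℝ)
    (S : Matrix (Fin n) (Fin n) ℝ)
    (hS : S = 1 + U * H.transpose * R⁻¹ * H * U) :
    condNum S ≤ 1 + infNorm (V⁻¹ * H * B * H.transpose * V⁻¹) :=
  stmt19_general n m B U R V hUsymm hUU hVsymm hVV H S hS
end
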